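/- Let A₀ = e₃ ⊗ (e₁ + i e₂)ᵀ ∈ gl(3,ℂ) and let Orb(A₀) = {e^{iφ} R₁ A₀ R₂⁻¹ : φ ∈ ℝ, R₁, R₂ ∈ SO(3)}. Then the subgroup SO(3) × SO(3), acting by (R₁, R₂) · A = R₁ A R₂⁻¹, acts transitively on Orb(A₀) (i.e. every element of Orb(A₀) is of the form R₁ A₀ R₂⁻¹), and the stabilizer {(R₁, R₂) ∈ SO(3) × SO(3) : R₁ A₀ R₂⁻¹ = A₀} is isomorphic, as a group, to the orthogonal group O(2). -/

import Mathlib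

open Matrix

noncomputable section

abbrev M3R : Type := Matrix (Fin 3) (Fin 3) ℝ
abbrev M3C : Type := Matrix (Fin 3) (Fin 3) ℂ

def isSO3 (R : M3R) : Prop := R * Rᵀ = 1 ∧ R.det = 1

def toC (R : M3R) : M3C := R.map (fun x => (x : ℂ))

/-- `A₀ = e₃ ⊗ (e₁ + i e₂)ᵀ`. -/
def A0 : M3C := !![0, 0, 0; 0, 0, 0; 1, Complex.I, 0]

/-- The orbit of `A₀` under the `U(1) × SO(3) × SO(3)` action. -/
def OrbA0 : Set M3C :=
  {A | ∃ (φ : ℝ) (R₁ R₂ : M3R), isSO3 R₁ ∧ isSO3 R₂ ∧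
    A = Complex.exp (φ * Complex.I) • (toC R₁ * A0 * (toC R₂)⁻¹)}

/-- The stabilizer of `A₀` in `SO(3) × SO(3)` acting by `(R₁, R₂) · A = R₁ A R₂⁻¹`,
as a subtype (with componentwise multiplication inherited from `M3R × M3R`). -/
abbrev StabA0 : Type :=
  {p : M3R × M3R // (isSO3 p.1 ∧ isSO3 p.2) ∧ toC p.1 * A0 * (toC p.2)⁻¹ = A0}

/-!
The phase is absorbed on the right: a rotation by `θ` about `e₃` multiplies `v = e₁ + i e₂`
by `e^{-iθ}`. For the stabilizer, `R₁ A₀ R₂⁻¹ = A₀` reads `(R₁ e₃) vᵀ = e₃ (vᵀ R₂)`; comparing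
real and imaginary parts gives `R₁ e₃ = a e₃` and that the first two rows of `R₂` are `a e₁ᵀ`,
`a e₂ᵀ`. Orthogonality and `det = 1` then force `R₁ = diag(B, det B)` with `B ∈ O(2)` and
`R₂ = diag(det B, det B, 1)`, and `B ↦ diag(B, det B)` is multiplicative.
-/

section ExtendByDet

variable {R : Type*} [CommRing R]

def extendByDet (B : Matrix (Fin 2) (Fin 2) R) : Matrix (Fin 3) (Fin 3) R :=
  !![B 0 0, B 0 1, 0; B 1 0, B 1 1, 0; 0, 0, B.det]

def topLeft (M : Matrix (Fin 3) (Fin 3) R) : Matrix (Fin 2) (Fin 2) R :=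
  !![M 0 0, M 0 1; M 1 0, M 1 1]

@[simp]
lemma topLeft_extendByDet (B : Matrix (Fin 2) (Fin 2) R) : topLeft (extendByDet B) = B := by
  ext i j; fin_cases i <;> fin_cases j <;> rfl

lemma extendByDet_injective : Function.Injective (extendByDet (R := R)) :=
  Function.LeftInverse.injective topLeft_extendByDet

lemma extendByDet_one : extendByDet (1 : Matrix (Fin 2) (Fin 2) R) = 1 := by
  ext i j; fin_cases i <;> fin_cases j <;> simp [extendByDet]

lemma extendByDet_mul (B C : Matrix (Fin 2) (Fin 2) R) :
    extendByDet (B * C) = extendByDet B * extendByDet C := by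
  ext i j; fin_cases i <;> fin_cases j <;>
    simp [extendByDet, Matrix.mul_apply, Fin.sum_univ_succ, Matrix.det_fin_two]

lemma extendByDet_transpose (B : Matrix (Fin 2) (Fin 2) R) :
    (extendByDet B)ᵀ = extendByDet Bᵀ := by
  ext i j; fin_cases i <;> fin_cases j <;> simp [extendByDet, Matrix.det_fin_two]

lemma det_extendByDet (B : Matrix (Fin 2) (Fin 2) R) : (extendByDet B).det = B.det ^ 2 := by
  rw [det_fin_three]
  simp only [extendByDet, of_apply, cons_val', cons_val_zero, cons_val_one, cons_val,
    cons_val_fin_one]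
  rw [det_fin_two]
  ring

end ExtendByDet

lemma isSO3_extendByDet_iff (B : Matrix (Fin 2) (Fin 2) ℝ) :
    isSO3 (extendByDet B) ↔ B ∈ orthogonalGroup (Fin 2) ℝ := by
  rw [mem_orthogonalGroup_iff, isSO3, extendByDet_transpose, ← extendByDet_mul,
    ← extendByDet_one, extendByDet_injective.eq_iff, det_extendByDet]
  refine ⟨And.left, fun h => ⟨h, ?_⟩⟩
  simpa [sq] using congrArg det h

lemma isSO3_mul {R₁ R₂ : M3R} (h₁ : isSO3 R₁) (h₂ : isSO3 R₂) : isSO3 (R₁ * R₂) := by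
  refine ⟨?_, by rw [det_mul, h₁.2, h₂.2, one_mul]⟩
  rw [transpose_mul, Matrix.mul_assoc, ← Matrix.mul_assoc R₂, h₂.1, Matrix.one_mul, h₁.1]

lemma isSO3_diagonal {a : ℝ} (ha : a * a = 1) : isSO3 (diagonal ![a, a, 1]) := by
  refine ⟨?_, by simpa [det_diagonal, Fin.prod_univ_three] using ha⟩
  rw [diagonal_transpose, diagonal_mul_diagonal, ← diagonal_one]
  congr 1
  ext i
  fin_cases i <;> simp [ha]

lemma eq_extendByDet_topLeft {R : M3R} (hR : isSO3 R) (h02 : R 0 2 = 0) (h12 : R 1 2 = 0) :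
    R = extendByDet (topLeft R) := by
  have hcol : R 2 2 ^ 2 = 1 := by
    simpa [Matrix.mul_apply, Fin.sum_univ_three, h02, h12, sq] using
      congrFun₂ (mul_eq_one_comm.1 hR.1 : Rᵀ * R = 1) 2 2
  have hrow : R 2 0 ^ 2 + R 2 1 ^ 2 + R 2 2 ^ 2 = 1 := by
    simpa [Matrix.mul_apply, Fin.sum_univ_three, sq, add_assoc] using congrFun₂ hR.1 2 2
  have h20 : R 2 0 = 0 := by nlinarith
  have h21 : R 2 1 = 0 := by nlinarith
  have hdet : R 2 2 * (topLeft R).det = 1 := by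
    rw [← hR.2, det_fin_three, det_fin_two, h02, h12, h20, h21]
    simp only [topLeft, of_apply, cons_val', cons_val_zero, cons_val_one, cons_val_fin_one]
    ring
  have h22 : R 2 2 = (topLeft R).det := by
    linear_combination (topLeft R).det * hcol - R 2 2 * hdet
  ext i j
  fin_cases i <;> fin_cases j <;> simp [extendByDet, topLeft, h02, h12, h20, h21, h22]

lemma eq_diagonal_of_rows {R : M3R} (hR : isSO3 R) {a : ℝ} (h0 : R 0 = ![a, 0, 0])
    (h1 : R 1 = ![0, a, 0]) : R = diagonal ![a, a, 1] := by
  have h00 : a * a = 1 := by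
    simpa [Matrix.mul_apply, Fin.sum_univ_three, h0] using congrFun₂ hR.1 0 0
  have h20 : a * R 2 0 = 0 := by
    simpa [Matrix.mul_apply, Fin.sum_univ_three, h0] using congrFun₂ hR.1 0 2
  have h21 : a * R 2 1 = 0 := by
    simpa [Matrix.mul_apply, Fin.sum_univ_three, h1] using congrFun₂ hR.1 1 2
  have ha : a ≠ 0 := left_ne_zero_of_mul_eq_one h00
  replace h20 := (mul_eq_zero.1 h20).resolve_left ha
  replace h21 := (mul_eq_zero.1 h21).resolve_left ha
  have h22 : R 2 2 = 1 := by
    have hdet := hR.2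
    rw [det_fin_three] at hdet
    simpa [h0, h1, h20, h21, h00] using hdet
  ext i j
  fin_cases i <;> fin_cases j <;> simp [h0, h1, h20, h21, h22]

lemma toC_mul (R₁ R₂ : M3R) : toC (R₁ * R₂) = toC R₁ * toC R₂ :=
  Matrix.map_mul (f := Complex.ofRealHom)

lemma toC_mul_toC_transpose {R : M3R} (hR : isSO3 R) : toC R * toC Rᵀ = 1 := by
  rw [← toC_mul, hR.1]
  exact Matrix.map_one _ Complex.ofReal_zero Complex.ofReal_one

lemma inv_toC {R : M3R} (hR : isSO3 R) : (toC R)⁻¹ = toC Rᵀ :=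
  inv_eq_right_inv (toC_mul_toC_transpose hR)

lemma mul_inv_toC_eq_iff {R : M3R} (hR : isSO3 R) {X Y : M3C} :
    X * (toC R)⁻¹ = Y ↔ X = Y * toC R := by
  have hu : IsUnit (toC R).det := isUnit_det_of_right_inverse (toC_mul_toC_transpose hR)
  constructor
  · rintro rfl
    exact (nonsing_inv_mul_cancel_right _ _ hu).symm
  · rintro rfl
    exact mul_nonsing_inv_cancel_right _ _ hu

def rot2 (θ : ℝ) : Matrix (Fin 2) (Fin 2) ℝ :=
  !![Real.cos θ, -Real.sin θ; Real.sin θ, Real.cos θ]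

lemma rot2_mem_orthogonalGroup (θ : ℝ) : rot2 θ ∈ orthogonalGroup (Fin 2) ℝ :=
  (of_mem_specialOrthogonalGroup_fin_two_iff.2
    ⟨rfl, rfl, by rw [neg_sq, add_comm, Real.sin_sq_add_cos_sq]⟩).1

lemma exp_smul_A0 (θ : ℝ) :
    Complex.exp (θ * Complex.I) • A0 = A0 * (toC (extendByDet (rot2 (-θ))))⁻¹ := by
  rw [inv_toC ((isSO3_extendByDet_iff _).2 (rot2_mem_orthogonalGroup _))]
  ext i j
  fin_cases i <;> fin_cases j <;>
    simp [A0, toC, extendByDet, rot2, Matrix.mul_apply, Fin.sum_univ_three, Complex.exp_mul_I,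
      Complex.ext_iff]

lemma exists_SO3_pair_of_mem_OrbA0 {A : M3C} (hA : A ∈ OrbA0) :
    ∃ R₁ R₂ : M3R, isSO3 R₁ ∧ isSO3 R₂ ∧ A = toC R₁ * A0 * (toC R₂)⁻¹ := by
  obtain ⟨φ, R₁, R₂, h₁, h₂, rfl⟩ := hA
  have hrot := (isSO3_extendByDet_iff _).2 (rot2_mem_orthogonalGroup (-φ))
  refine ⟨R₁, R₂ * extendByDet (rot2 (-φ)), h₁, isSO3_mul h₂ hrot, ?_⟩
  rw [toC_mul, Matrix.mul_inv_rev, ← Matrix.mul_assoc,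
    Matrix.mul_assoc _ A0 (toC (extendByDet _))⁻¹, ← exp_smul_A0, mul_smul_comm, smul_mul_assoc]

lemma toC_mul_A0_eq_A0_mul_toC_iff (R₁ R₂ : M3R) :
    toC R₁ * A0 = A0 * toC R₂ ↔
      R₁ 0 2 = 0 ∧ R₁ 1 2 = 0 ∧ R₂ 0 = ![R₁ 2 2, 0, 0] ∧ R₂ 1 = ![0, R₁ 2 2, 0] := by
  simp [← Matrix.ext_iff, funext_iff, Fin.forall_fin_succ, toC, A0, Matrix.mul_apply,
    Matrix.vecMul, dotProduct, Fin.sum_univ_three, Complex.ext_iff]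
  grind

lemma stabilizes_A0_iff {R₁ R₂ : M3R} :
    (isSO3 R₁ ∧ isSO3 R₂) ∧ toC R₁ * A0 * (toC R₂)⁻¹ = A0 ↔
      ∃ B ∈ orthogonalGroup (Fin 2) ℝ,
        R₁ = extendByDet B ∧ R₂ = diagonal ![B.det, B.det, 1] := by
  constructor
  · rintro ⟨⟨h₁, h₂⟩, h⟩
    rw [mul_inv_toC_eq_iff h₂, toC_mul_A0_eq_A0_mul_toC_iff] at h
    obtain ⟨h02, h12, h0, h1⟩ := h
    have hR₁ := eq_extendByDet_topLeft h₁ h02 h12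
    have h22 : R₁ 2 2 = (topLeft R₁).det := congrFun₂ hR₁ 2 2
    rw [h22] at h0 h1
    exact ⟨topLeft R₁, (isSO3_extendByDet_iff _).1 (hR₁ ▸ h₁), hR₁, eq_diagonal_of_rows h₂ h0 h1⟩
  · rintro ⟨B, hB, rfl, rfl⟩
    have hdet : B.det * B.det = 1 := by
      simpa using congrArg det ((mem_orthogonalGroup_iff _ _).1 hB)
    refine ⟨⟨(isSO3_extendByDet_iff B).2 hB, isSO3_diagonal hdet⟩, ?_⟩
    rw [mul_inv_toC_eq_iff (isSO3_diagonal hdet), toC_mul_A0_eq_A0_mul_toC_iff]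
    refine ⟨rfl, rfl, ?_, ?_⟩ <;> ext j <;> fin_cases j <;> simp [extendByDet]

def stabA0ToO2 (p : StabA0) : orthogonalGroup (Fin 2) ℝ :=
  ⟨topLeft p.1.1, by
    obtain ⟨B, hB, h, -⟩ := stabilizes_A0_iff.1 p.2
    rwa [h, topLeft_extendByDet]⟩

lemma stabA0ToO2_injective : Function.Injective stabA0ToO2 := by
  rintro ⟨⟨P₁, P₂⟩, hP⟩ ⟨⟨Q₁, Q₂⟩, hQ⟩ h
  obtain ⟨B, -, rfl, rfl⟩ := stabilizes_A0_iff.1 hP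
  obtain ⟨C, -, rfl, rfl⟩ := stabilizes_A0_iff.1 hQ
  obtain rfl : B = C := by simpa [stabA0ToO2] using congrArg Subtype.val h
  rfl

lemma stabA0ToO2_surjective : Function.Surjective stabA0ToO2 := fun ⟨B, hB⟩ =>
  ⟨⟨(extendByDet B, diagonal ![B.det, B.det, 1]), stabilizes_A0_iff.2 ⟨B, hB, rfl, rfl⟩⟩,
    Subtype.ext (topLeft_extendByDet B)⟩

lemma stabA0ToO2_mul {p q r : StabA0} (h : r.val = p.val * q.val) :
    stabA0ToO2 r = stabA0ToO2 p * stabA0ToO2 q := by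
  obtain ⟨B, -, hB, -⟩ := stabilizes_A0_iff.1 p.2
  obtain ⟨C, -, hC, -⟩ := stabilizes_A0_iff.1 q.2
  apply Subtype.ext
  simp only [stabA0ToO2, Submonoid.coe_mul, congrArg Prod.fst h, Prod.fst_mul, hB, hC,
    ← extendByDet_mul, topLeft_extendByDet]

/-- `SO(3) × SO(3)` acts transitively on `Orb(A₀)`, and the stabilizer of `A₀` is
isomorphic, as a group, to the orthogonal group `O(2)`. -/
theorem SO3xSO3_transitive_and_stabilizer_iso_O2 :
    (∀ A ∈ OrbA0, ∃ R₁ R₂ : M3R, isSO3 R₁ ∧ isSO3 R₂ ∧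
        A = toC R₁ * A0 * (toC R₂)⁻¹) ∧
    ∃ f : StabA0 → Matrix.orthogonalGroup (Fin 2) ℝ,
      Function.Bijective f ∧
        ∀ a b c : StabA0, c.val = a.val * b.val → f c = f a * f b :=
  ⟨fun _ hA => exists_SO3_pair_of_mem_OrbA0 hA,
    stabA0ToO2, ⟨stabA0ToO2_injective, stabA0ToO2_surjective⟩, fun _ _ _ => stabA0ToO2_mul⟩
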